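/- Let c be a colouring of E_n by m upsets. Suppose level L^i of E_n realizes at most k ≤ 2^n distinct ∼^{c}_ω-types, and all elements of level L^{i+1} have the same 0-type over c (belong to exactly the same colour upsets). Then level L^{i+1} realizes at most k distinct ∼^c_ω-types. -/

import Mathlib

/-!
Among the `2^n + 1` points of level `i` some `ω`-type is realised twice. The point `x^l_{i+1}`
sees all of level `i` except `x^{l+1}_i`, so the set of level-`i` types it sees is the image of
level `i` with one point removed, which depends only on the type of the removed point; for
`l = 2^n` nothing is removed, which is the same as removing one point of a doubly realised type.
All points of level `i+1` share their `0`-type and see the same lower levels, so a bisimulation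
argument shows that their `ω`-types are determined by the level-`i` types they see. Hence the
`ω`-type of `x^l_{i+1}` factors through the type of the removed point, of which there are at
most `k`.
-/

def EnC (n : ℕ) : Type := Option {p : ℕ × ℕ // p.1 ≤ 2 ^ n}
def EnPt (n : ℕ) (l i : ℕ) (h : l ≤ 2 ^ n) : EnC n := some ⟨(l, i), h⟩
def EnInf (n : ℕ) : EnC n := none
def EnLe {n : ℕ} : EnC n → EnC n → Prop
  | none, _ => True
  | some _, none => False
  | some p, some q =>
      p.1 = q.1 ∨ (p.1.2 = q.1.2 + 1 ∧ q.1.1 ≠ p.1.1 + 1) ∨ q.1.2 + 2 ≤ p.1.2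

instance (n : ℕ) : PartialOrder (EnC n) where
  le := EnLe
  le_refl a := by cases a with
    | none => trivial
    | some p => exact Or.inl rfl
  le_trans a b c hab hbc := by
    cases a with
    | none => trivial
    | some p =>
      cases b with
      | none => simp only [EnLe] at hab
      | some q =>
        cases c with
        | none => simp only [EnLe] at hbc
        | some r =>
          simp only [EnLe] at *
          rcases hab with h1 | h1 | h1 <;> rcases hbc with h2 | h2 | h2
          · exact Or.inl (h1.trans h2)
          · rw [h1]; exact Or.inr (Or.inl h2)
          · rw [h1]; exact Or.inr (Or.inr h2)
          · rw [← h2]; exact Or.inr (Or.inl h1)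
          · exact Or.inr (Or.inr (by omega))
          · exact Or.inr (Or.inr (by omega))
          · rw [← h2]; exact Or.inr (Or.inr h1)
          · exact Or.inr (Or.inr (by omega))
          · exact Or.inr (Or.inr (by omega))
  le_antisymm a b hab hba := by
    cases a with
    | none => cases b with
      | none => rfl
      | some q => simp only [EnLe] at hba
    | some p =>
      cases b with
      | none => simp only [EnLe] at hab
      | some q =>
        simp only [EnLe] at hab hba
        congr 1
        exact Subtype.ext (by rcases hab with h | h | h <;> rcases hba with h' | h' | h' <;>
          first | exact h | exact h'.symm | omega)

def EnLevel (n j : ℕ) : Set (EnC n) := {p | ∃ (l : ℕ) (h : l ≤ 2 ^ n), p = EnPt n l j h}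
def simRel {α : Type*} [Preorder α] (G : Set (Set α)) : ℕ → α → α → Prop
  | 0 => fun x y => ∀ g ∈ G, (x ∈ g ↔ y ∈ g)
  | m + 1 => fun x y =>
      (∀ z, x ≤ z → ∃ w, y ≤ w ∧ simRel G m z w) ∧
      (∀ w, y ≤ w → ∃ z, x ≤ z ∧ simRel G m z w)
def simOmega {α : Type*} [Preorder α] (G : Set (Set α)) (x y : α) : Prop :=
  ∀ m, simRel G m x y
def enTypes {n : ℕ} (G : Set (Set (EnC n))) (S : Set (EnC n)) : Set (Set (EnC n)) :=
  {T | ∃ p ∈ S, T = {q | simOmega G p q}}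

open Set Function

section Combinatorics

variable {ι β γ : Type*}

theorem image_compl_singleton_congr {f : ι → β} {a b : ι} (h : f a = f b) :
    f '' {a}ᶜ = f '' {b}ᶜ := by
  suffices ∀ a b : ι, f a = f b → f '' {a}ᶜ ⊆ f '' {b}ᶜ from
    (this a b h).antisymm (this b a h.symm)
  rintro a b h _ ⟨x, hxa, rfl⟩
  by_cases hxb : x = b
  · subst hxb
    exact ⟨a, fun hab => hxa hab.symm, h⟩
  · exact ⟨x, hxb, rfl⟩

theorem image_compl_singleton_eq_range {f : ι → β} {a b : ι} (hab : a ≠ b) (h : f a = f b) :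
    f '' {b}ᶜ = range f := by
  refine (image_subset_range _ _).antisymm ?_
  rintro _ ⟨x, rfl⟩
  by_cases hxb : x = b
  · subst hxb
    exact ⟨a, hab, h⟩
  · exact ⟨x, hxb, rfl⟩

theorem encard_range_le_of_factorsThrough [Nonempty γ] {g : ι → γ} {f : ι → β}
    (h : g.FactorsThrough f) : (range g).encard ≤ (range f).encard := by
  obtain ⟨e, rfl⟩ := (factorsThrough_iff g).1 h
  rw [range_comp]
  exact encard_image_le _ _

end Combinatorics

section Bisimulation

variable {α : Type*} [Preorder α] {G : Set (Set α)}

theorem simRel_refl (m : ℕ) (x : α) : simRel G m x x := by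
  induction m generalizing x with
  | zero => exact fun _ _ => Iff.rfl
  | succ m ih => exact ⟨fun z hz => ⟨z, hz, ih z⟩, fun w hw => ⟨w, hw, ih w⟩⟩

theorem simRel_symm {m : ℕ} {x y : α} (h : simRel G m x y) : simRel G m y x := by
  induction m generalizing x y with
  | zero => exact fun g hg => (h g hg).symm
  | succ m ih =>
    exact ⟨fun z hz => (h.2 z hz).imp fun _ ⟨hw, hzw⟩ => ⟨hw, ih hzw⟩,
      fun w hw => (h.1 w hw).imp fun _ ⟨hz, hwz⟩ => ⟨hz, ih hwz⟩⟩

theorem simRel_trans {m : ℕ} {x y z : α} (hxy : simRel G m x y) (hyz : simRel G m y z) :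
    simRel G m x z := by
  induction m generalizing x y z with
  | zero => exact fun g hg => (hxy g hg).trans (hyz g hg)
  | succ m ih =>
    constructor
    · intro a ha
      obtain ⟨b, hb, hab⟩ := hxy.1 a ha
      obtain ⟨c, hc, hbc⟩ := hyz.1 b hb
      exact ⟨c, hc, ih hab hbc⟩
    · intro c hc
      obtain ⟨b, hb, hbc⟩ := hyz.2 c hc
      obtain ⟨a, ha, hab⟩ := hxy.2 b hb
      exact ⟨a, ha, ih hab hbc⟩

theorem simOmega_refl (x : α) : simOmega G x x := fun m => simRel_refl m x

theorem simOmega_symm {x y : α} (h : simOmega G x y) : simOmega G y x :=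
  fun m => simRel_symm (h m)

theorem simOmega_trans {x y z : α} (hxy : simOmega G x y) (hyz : simOmega G y z) :
    simOmega G x z :=
  fun m => simRel_trans (hxy m) (hyz m)

variable (G) in
def omegaType (x : α) : Set α := {y | simOmega G x y}

theorem omegaType_eq_iff {x y : α} : omegaType G x = omegaType G y ↔ simOmega G x y := by
  refine ⟨fun h => ?_, fun h => ext fun z => ⟨?_, ?_⟩⟩
  · show y ∈ omegaType G x
    rw [h]
    exact simOmega_refl y
  · exact simOmega_trans (simOmega_symm h)
  · exact simOmega_trans h

end Bisimulation

theorem simOmega_of_forall_lt {α : Type*} [PartialOrder α] {G : Set (Set α)} {x y : α}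
    (h0 : simRel G 0 x y) (hxy : ∀ z, x < z → ∃ w, y ≤ w ∧ simOmega G z w)
    (hyx : ∀ w, y < w → ∃ z, x ≤ z ∧ simOmega G z w) : simOmega G x y := by
  intro m
  induction m with
  | zero => exact h0
  | succ m ih =>
    constructor
    · intro z hz
      rcases hz.eq_or_lt with rfl | hlt
      · exact ⟨y, le_rfl, ih⟩
      · obtain ⟨w, hw, hzw⟩ := hxy z hlt
        exact ⟨w, hw, hzw m⟩
    · intro w hw
      rcases hw.eq_or_lt with rfl | hlt
      · exact ⟨x, le_rfl, ih⟩
      · obtain ⟨z, hz, hzw⟩ := hyx w hlt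
        exact ⟨z, hz, hzw m⟩

section En

variable {n : ℕ}

theorem enTypes_eq_image (G : Set (Set (EnC n))) (S : Set (EnC n)) :
    enTypes G S = omegaType G '' S := by
  ext T
  exact exists_congr fun p => and_congr_right fun _ => eq_comm

variable (n) in
def levelPt (i : ℕ) (l : Fin (2 ^ n + 1)) : EnC n := EnPt n l i (Nat.lt_succ_iff.mp l.isLt)

theorem range_levelPt (i : ℕ) : range (levelPt n i) = EnLevel n i := by
  ext p
  constructor
  · rintro ⟨l, rfl⟩
    exact ⟨l, _, rfl⟩
  · rintro ⟨l, hl, rfl⟩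
    exact ⟨⟨l, Nat.lt_succ_of_le hl⟩, rfl⟩

theorem levelPt_succ_le_levelPt {i : ℕ} {l j : Fin (2 ^ n + 1)} (h : (j : ℕ) ≠ l + 1) :
    levelPt n (i + 1) l ≤ levelPt n i j :=
  Or.inr (Or.inl ⟨rfl, h⟩)

theorem levelPt_succ_lt_cases {i : ℕ} {l : Fin (2 ^ n + 1)} {z : EnC n}
    (hz : levelPt n (i + 1) l < z) :
    (∃ j : Fin (2 ^ n + 1), (j : ℕ) ≠ l + 1 ∧ z = levelPt n i j) ∨
      ∀ l', levelPt n (i + 1) l' ≤ z := by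
  obtain ⟨hle, hne⟩ := lt_iff_le_and_ne.1 hz
  cases z with
  | none => exact hle.elim
  | some q =>
    rcases (hle : EnLe _ _) with heq | ⟨hlevel, hj⟩ | hlow
    · exact (hne (congrArg some (Subtype.ext heq))).elim
    · refine Or.inl ⟨⟨q.1.1, Nat.lt_succ_of_le q.2⟩, hj, ?_⟩
      exact congrArg some (Subtype.ext (Prod.ext rfl (by simp at hlevel ⊢; omega)))
    · exact Or.inr fun l' => Or.inr (Or.inr hlow)

def seenTypes (G : Set (Set (EnC n))) (i : ℕ) (l : Fin (2 ^ n + 1)) : Set (Set (EnC n)) :=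
  (omegaType G ∘ levelPt n i) '' {j | (j : ℕ) ≠ l + 1}

variable {G : Set (Set (EnC n))}

theorem exists_le_simOmega_of_seenTypes_subset {i : ℕ} {l l' : Fin (2 ^ n + 1)} {z : EnC n}
    (h : seenTypes G i l ⊆ seenTypes G i l') (hz : levelPt n (i + 1) l < z) :
    ∃ w, levelPt n (i + 1) l' ≤ w ∧ simOmega G z w := by
  rcases levelPt_succ_lt_cases hz with ⟨j, hj, rfl⟩ | hlow
  · obtain ⟨j', hj', htype⟩ := h ⟨j, hj, rfl⟩
    exact ⟨levelPt n i j', levelPt_succ_le_levelPt hj', omegaType_eq_iff.1 htype.symm⟩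
  · exact ⟨z, hlow l', simOmega_refl z⟩

theorem simOmega_levelPt_succ {i : ℕ} {l l' : Fin (2 ^ n + 1)}
    (h0 : simRel G 0 (levelPt n (i + 1) l) (levelPt n (i + 1) l'))
    (h : seenTypes G i l = seenTypes G i l') :
    simOmega G (levelPt n (i + 1) l) (levelPt n (i + 1) l') :=
  simOmega_of_forall_lt h0 (fun _ hz => exists_le_simOmega_of_seenTypes_subset h.le hz)
    fun _ hw => (exists_le_simOmega_of_seenTypes_subset h.ge hw).imp
      fun _ ⟨hz, hwz⟩ => ⟨hz, simOmega_symm hwz⟩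

theorem exists_seenTypes_eq_image_compl {i : ℕ} {a b : Fin (2 ^ n + 1)} (hab : a ≠ b)
    (htype : omegaType G (levelPt n i a) = omegaType G (levelPt n i b)) :
    ∃ σ : Fin (2 ^ n + 1) → Fin (2 ^ n + 1),
      ∀ l, seenTypes G i l = (omegaType G ∘ levelPt n i) '' {σ l}ᶜ := by
  refine ⟨fun l => if h : (l : ℕ) + 1 < 2 ^ n + 1 then ⟨l + 1, h⟩ else b, fun l => ?_⟩
  by_cases h : (l : ℕ) + 1 < 2 ^ n + 1
  · simp only [seenTypes, dif_pos h]
    congr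
    ext j
    simp [Fin.ext_iff]
  · simp only [seenTypes, dif_neg h]
    rw [image_compl_singleton_eq_range hab htype, ← image_univ]
    congr
    ext j
    simp only [iff_true]
    omega

end En

theorem EnLevel_succ_types_le_general (n m k i : ℕ) (c : Fin m → Set (EnC n))
    (hk : k ≤ 2 ^ n)
    (hi : (enTypes (Set.range c) (EnLevel n i)).encard ≤ (k : ℕ∞))
    (h0 : ∀ p ∈ EnLevel n (i + 1), ∀ q ∈ EnLevel n (i + 1),
      simRel (Set.range c) 0 p q) :
    (enTypes (Set.range c) (EnLevel n (i + 1))).encard ≤ (k : ℕ∞) := by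
  simp only [enTypes_eq_image, ← range_levelPt, ← range_comp, forall_mem_range] at hi h0 ⊢
  obtain ⟨a, -, b, -, hab, htype⟩ :=
    exists_ne_map_eq_of_encard_lt_of_maps_to (s := univ) (hi.trans_lt <| by
      rw [encard_univ, ENat.card_eq_coe_fintype_card, Fintype.card_fin]
      exact_mod_cast Nat.lt_succ_of_le hk)
      (mapsTo_range _ _)
  obtain ⟨σ, hσ⟩ := exists_seenTypes_eq_image_compl hab htype
  have hfactors : (omegaType (range c) ∘ levelPt n (i + 1)).FactorsThrough
      ((omegaType (range c) ∘ levelPt n i) ∘ σ) := fun l l' h =>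
    omegaType_eq_iff.2 <| simOmega_levelPt_succ (h0 l l') <| by
      rw [hσ, hσ]
      exact image_compl_singleton_congr h
  calc (range (omegaType (range c) ∘ levelPt n (i + 1))).encard
      ≤ (range ((omegaType (range c) ∘ levelPt n i) ∘ σ)).encard :=
        encard_range_le_of_factorsThrough hfactors
    _ ≤ (range (omegaType (range c) ∘ levelPt n i)).encard :=
        encard_le_encard (range_comp_subset_range _ _)
    _ ≤ k := hi

/-- If level `i` of `E_n` realizes at most `k ≤ 2^n` distinct `∼^c_ω`-types
over a colouring by `m` upsets, and all elements of level `i+1` have the same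
`0`-type, then level `i+1` realizes at most `k` distinct `∼^c_ω`-types. -/
theorem EnLevel_succ_types_le (n m k i : ℕ) (c : Fin m → Set (EnC n))
    (hc : ∀ j, IsUpperSet (c j)) (hk : k ≤ 2 ^ n)
    (hi : (enTypes (Set.range c) (EnLevel n i)).encard ≤ (k : ℕ∞))
    (h0 : ∀ p ∈ EnLevel n (i + 1), ∀ q ∈ EnLevel n (i + 1),
      simRel (Set.range c) 0 p q) :
    (enTypes (Set.range c) (EnLevel n (i + 1))).encard ≤ (k : ℕ∞) :=
  EnLevel_succ_types_le_general n m k i c hk hi h0
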